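/- For every (a,ℓ)∈L^∞(0,T;ℝ^{n×n})×L^∞(0,T;ℝⁿ) with mild solution y=S(a,ℓ) and every (δa,δℓ)∈L^∞(0,T;ℝ^{n×n})×L^∞(0,T;ℝⁿ), the linearized integral equation δy(t)=∫₀ᵗ ((t−s)^{γ−1}/Γ(γ)) f'(a(s)y(s)+ℓ(s); a(s)δy(s)+δa(s)y(s)+δℓ(s)) ds, t∈[0,T], admits a unique solution δy∈C([0,T];ℝⁿ). -/

import Mathlib

open MeasureTheory Set Filter Topology

noncomputable section

/-- `ℝⁿ` with the Euclidean norm. -/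
abbrev Vec (n : ℕ) := EuclideanSpace ℝ (Fin n)

/-- `ℝ^{n×n}` with the Frobenius (Euclidean) norm. -/
abbrev Mat (n : ℕ) := EuclideanSpace ℝ ((Fin n) × (Fin n))

/-- Matrix-vector multiplication `A * x`. -/
def mv {n : ℕ} (A : Mat n) (x : Vec n) : Vec n :=
  (WithLp.equiv 2 (Fin n → ℝ)).symm (fun i => ∑ j, A (i, j) * x j)

/-- `y ∈ C([0,T];ℝⁿ)` is a mild solution of the state equation
`∂^γ y = f(a y + ℓ)`, `y(0) = y₀`, i.e. it satisfies the Volterra integral equation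
`y(t) = y₀ + ∫₀ᵗ ((t-s)^(γ-1)/Γ(γ)) f(a(s) y(s) + ℓ(s)) ds` for all `t ∈ [0,T]`. -/
def IsMildSolution {n : ℕ} (γ T : ℝ) (y₀ : Vec n) (f : Vec n → Vec n)
    (a : ℝ → Mat n) (ℓ : ℝ → Vec n) (y : ℝ → Vec n) : Prop :=
  ContinuousOn y (Icc 0 T) ∧
  ∀ t ∈ Icc (0:ℝ) T,
    y t = y₀ + ∫ s in (0:ℝ)..t, ((t - s) ^ (γ - 1) / Real.Gamma γ) • f (mv (a s) (y s) + ℓ s)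

/-- `δy` solves the "linearized" integral equation
`δy(t) = ∫₀ᵗ ((t-s)^(γ-1)/Γ(γ)) f'(a y + ℓ; a δy + δa y + δℓ)(s) ds`, `t ∈ [0,T]`,
where `f' z d` denotes the directional derivative of `f` at `z` in direction `d`. -/
def IsLinSolution {n : ℕ} (γ T : ℝ) (f' : Vec n → Vec n → Vec n)
    (a : ℝ → Mat n) (ℓ : ℝ → Vec n) (y : ℝ → Vec n)
    (δa : ℝ → Mat n) (δℓ : ℝ → Vec n) (δy : ℝ → Vec n) : Prop :=
  ContinuousOn δy (Icc 0 T) ∧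
  ∀ t ∈ Icc (0:ℝ) T,
    δy t = ∫ s in (0:ℝ)..t, ((t - s) ^ (γ - 1) / Real.Gamma γ) •
      f' (mv (a s) (y s) + ℓ s) (mv (a s) (δy s) + mv (δa s) (y s) + δℓ s)

/-
The linearized equation is a Volterra equation `δy = I^γ [F(·, δy)]` for the Riemann–Liouville
integral `I^γ`, with `F(s, x) = f'(z(s); a(s) x + b(s))`, `z = a y + ℓ`, `b = δa y + δℓ`.
Directional derivatives of an `L`-Lipschitz map are `L`-Lipschitz in the direction (limits of
`L`-Lipschitz difference quotients) and jointly measurable (pointwise limits of continuous maps),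
so `F` is a Carathéodory function, uniformly Lipschitz in `x`, although `f'(z; ·)` need not be
linear.

Existence and uniqueness then come from Banach's fixed point theorem in the Bielecki norm
`sup_t exp (-ρ t) ‖u t‖`: since `I^γ [exp (ρ ·)] (t) ≤ exp (ρ t) / ρ ^ γ`, the Volterra operator
is `K / ρ ^ γ`-Lipschitz for that norm. It maps continuous functions to continuous ones because
`I^γ g` is `γ`-Hölder for bounded `g` when `γ ≤ 1`.
-/

open scoped NNReal

section MatrixVector

variable {n : ℕ}

lemma mv_sub (A : Mat n) (x y : Vec n) : mv A (x - y) = mv A x - mv A y := by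
  ext i
  simp [mv, mul_sub, Finset.sum_sub_distrib]

lemma norm_mv_le (A : Mat n) (x : Vec n) : ‖mv A x‖ ≤ ‖A‖ * ‖x‖ := by
  refine le_of_sq_le_sq ?_ (by positivity)
  simp only [mul_pow, EuclideanSpace.norm_sq_eq, Real.norm_eq_abs, sq_abs, Fintype.sum_prod_type,
    Finset.sum_mul]
  refine Finset.sum_le_sum fun i _ => ?_
  simpa [mv, Finset.sum_mul] using
    Finset.sum_mul_sq_le_sq_mul_sq Finset.univ (fun j => A (i, j)) (fun j => x j)

lemma lipschitzWith_mv (A : Mat n) : LipschitzWith ‖A‖₊ (mv A) :=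
  LipschitzWith.of_dist_le_mul fun x y => by
    rw [dist_eq_norm, dist_eq_norm, ← mv_sub]
    exact norm_mv_le A (x - y)

lemma continuous_mv : Continuous fun p : Mat n × Vec n => mv p.1 p.2 := by
  unfold mv
  exact (PiLp.continuous_toLp 2 _).comp (by fun_prop)

lemma _root_.AEMeasurable.mv {α : Type*} [MeasurableSpace α] {μ : Measure α} {A : α → Mat n}
    {u : α → Vec n} (hA : AEMeasurable A μ) (hu : AEMeasurable u μ) :
    AEMeasurable (fun s => mv (A s) (u s)) μ :=
  continuous_mv.measurable.comp_aemeasurable (hA.prodMk hu)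

end MatrixVector

section DirectionalDerivative

variable {E F : Type*} [NormedAddCommGroup E] [NormedSpace ℝ E] [NormedAddCommGroup F]
  [NormedSpace ℝ F] {f : E → F} {f' : E → E → F} {K : ℝ≥0}

def HasDirectionalDerivatives (f : E → F) (f' : E → E → F) : Prop :=
  ∀ z d, Tendsto (fun τ : ℝ => τ⁻¹ • (f (z + τ • d) - f z)) (𝓝[>] 0) (𝓝 (f' z d))

lemma lipschitzWith_dirDeriv (hf : LipschitzWith K f) (hf' : HasDirectionalDerivatives f f')
    (z : E) : LipschitzWith K (f' z) := by
  refine (isClosed_setOfPred_lipschitzWith K).mem_of_tendsto (tendsto_pi_nhds.2 (hf' z)) ?_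
  filter_upwards [self_mem_nhdsWithin] with τ (hτ : 0 < τ)
  refine LipschitzWith.of_dist_le_mul fun d₁ d₂ => ?_
  have hlip := hf.dist_le_mul (z + τ • d₁) (z + τ • d₂)
  rw [dist_add_left, dist_smul₀, Real.norm_of_nonneg hτ.le] at hlip
  rw [dist_smul₀, dist_sub_right, Real.norm_of_nonneg (inv_nonneg.2 hτ.le), inv_mul_le_iff₀ hτ]
  linarith

lemma norm_dirDeriv_le (hf : LipschitzWith K f) (hf' : HasDirectionalDerivatives f f')
    (z d : E) : ‖f' z d‖ ≤ K * ‖d‖ := by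
  have h0 : f' z 0 = 0 := tendsto_nhds_unique (hf' z 0) (by simp)
  simpa [h0] using (lipschitzWith_dirDeriv hf hf' z).norm_sub_le d 0

lemma measurable_uncurry_dirDeriv [MeasurableSpace E] [OpensMeasurableSpace (E × E)]
    [MeasurableSpace F] [BorelSpace F] (hf : Continuous f)
    (hf' : HasDirectionalDerivatives f f') :
    Measurable (Function.uncurry f') := by
  have hτ : Tendsto (fun k : ℕ => 1 / ((k : ℝ) + 1)) atTop (𝓝[>] 0) :=
    tendsto_nhdsWithin_of_tendsto_nhds_of_eventually_within _
      tendsto_one_div_add_atTop_nhds_zero_nat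
      (Eventually.of_forall fun _ => mem_Ioi.2 Nat.one_div_pos_of_nat)
  exact measurable_of_tendsto_metrizable
    (fun k => Continuous.measurable (by dsimp only [Function.comp_def]; fun_prop))
    (tendsto_pi_nhds.2 fun p => (hf' p.1 p.2).comp hτ)

end DirectionalDerivative

lemma continuousOn_of_norm_sub_le_mul_rpow {F : Type*} [SeminormedAddCommGroup F] {f : ℝ → F}
    {s : Set ℝ} {C r : ℝ} (hr : 0 < r)
    (h : ∀ x ∈ s, ∀ y ∈ s, x ≤ y → ‖f y - f x‖ ≤ C * (y - x) ^ r) : ContinuousOn f s := by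
  intro x hx
  rw [ContinuousWithinAt, tendsto_iff_norm_sub_tendsto_zero]
  have hbound : Tendsto (fun y => C * |y - x| ^ r) (𝓝[s] x) (𝓝 0) := by
    have hcont : Continuous fun y => C * |y - x| ^ r :=
      continuous_const.mul ((Real.continuous_rpow_const hr.le).comp (by fun_prop))
    simpa [Real.zero_rpow hr.ne'] using (hcont.tendsto x).mono_left nhdsWithin_le_nhds
  refine squeeze_zero' (Eventually.of_forall fun _ => norm_nonneg _) ?_ hbound
  filter_upwards [self_mem_nhdsWithin] with y hy
  rcases le_total x y with hxy | hyx
  · rw [abs_of_nonneg (sub_nonneg.2 hxy)]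
    exact h x hx y hy hxy
  · rw [norm_sub_rev, abs_sub_comm, abs_of_nonneg (sub_nonneg.2 hyx)]
    exact h y hy x hx hyx

section AbelKernel

open intervalIntegral

variable {E : Type*} [NormedAddCommGroup E] [NormedSpace ℝ E] {γ : ℝ}

lemma intervalIntegrable_rpow_sub (hγ : 0 < γ) (a b c : ℝ) :
    IntervalIntegrable (fun s => (c - s) ^ (γ - 1)) volume a b := by
  simpa using (intervalIntegrable_rpow' (a := c - a) (b := c - b)
    (by linarith : (-1 : ℝ) < γ - 1)).comp_sub_left c

lemma integral_rpow_sub (hγ : 0 < γ) (a b c : ℝ) :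
    ∫ s in a..b, (c - s) ^ (γ - 1) = ((c - a) ^ γ - (c - b) ^ γ) / γ := by
  rw [integral_comp_sub_left (· ^ (γ - 1)) c, integral_rpow (Or.inl (by linarith)),
    sub_add_cancel]

lemma intervalIntegrable_rpow_sub_smul (hγ : 0 < γ) {a b : ℝ} (hab : a ≤ b) (c M : ℝ)
    {g : ℝ → E} (hg : AEStronglyMeasurable g (volume.restrict (Ioc a b)))
    (hM : ∀ s ∈ Ioc a b, ‖g s‖ ≤ M) :
    IntervalIntegrable (fun s => (c - s) ^ (γ - 1) • g s) volume a b :=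
  (intervalIntegrable_iff_integrableOn_Ioc_of_le hab).2 <|
    (intervalIntegrable_rpow_sub hγ a b c).1.smul_bdd M hg
      ((ae_restrict_iff' measurableSet_Ioc).2 (ae_of_all _ hM))

lemma norm_integral_rpow_sub_smul_le (hγ : 0 < γ) {a b M : ℝ} (hab : a ≤ b) {g : ℝ → E}
    (hM : ∀ s ∈ Ioc a b, ‖g s‖ ≤ M) :
    ‖∫ s in a..b, (b - s) ^ (γ - 1) • g s‖ ≤ M * (b - a) ^ γ / γ := by
  calc ‖∫ s in a..b, (b - s) ^ (γ - 1) • g s‖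
      ≤ ∫ s in a..b, M * (b - s) ^ (γ - 1) := by
        refine norm_integral_le_of_norm_le hab (ae_of_all _ fun s hs => ?_)
          ((intervalIntegrable_rpow_sub hγ a b b).const_mul M)
        have hker : 0 ≤ (b - s) ^ (γ - 1) := Real.rpow_nonneg (by linarith [hs.2]) _
        rw [norm_smul, Real.norm_of_nonneg hker, mul_comm]
        exact mul_le_mul_of_nonneg_right (hM s hs) hker
    _ = M * (b - a) ^ γ / γ := by
        rw [intervalIntegral.integral_const_mul, integral_rpow_sub hγ, sub_self,
          Real.zero_rpow hγ.ne', sub_zero, mul_div_assoc]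

lemma norm_integral_rpow_sub_sub_rpow_sub_smul_le (hγ₀ : 0 < γ) (hγ₁ : γ ≤ 1) {a b c M : ℝ}
    (hab : a ≤ b) (hbc : b ≤ c) (hM₀ : 0 ≤ M) {g : ℝ → E} (hM : ∀ s ∈ Ioc a b, ‖g s‖ ≤ M) :
    ‖∫ s in a..b, ((c - s) ^ (γ - 1) - (b - s) ^ (γ - 1)) • g s‖ ≤ M * (c - b) ^ γ / γ := by
  calc ‖∫ s in a..b, ((c - s) ^ (γ - 1) - (b - s) ^ (γ - 1)) • g s‖
      ≤ ∫ s in a..b, M * ((b - s) ^ (γ - 1) - (c - s) ^ (γ - 1)) := by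
        refine norm_integral_le_of_norm_le hab ?_
          (((intervalIntegrable_rpow_sub hγ₀ a b b).sub
            (intervalIntegrable_rpow_sub hγ₀ a b c)).const_mul M)
        filter_upwards [compl_mem_ae_iff.2 (measure_singleton b)] with s (hsb : s ≠ b) hs
        have hker : (c - s) ^ (γ - 1) ≤ (b - s) ^ (γ - 1) :=
          Real.rpow_le_rpow_of_nonpos (by linarith [lt_of_le_of_ne hs.2 hsb]) (by linarith)
            (by linarith)
        rw [norm_smul, Real.norm_of_nonpos (by linarith), neg_sub, mul_comm]
        exact mul_le_mul_of_nonneg_right (hM s hs) (by linarith)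
    _ = M * (((b - a) ^ γ - (c - a) ^ γ + (c - b) ^ γ) / γ) := by
        rw [intervalIntegral.integral_const_mul,
          integral_sub (intervalIntegrable_rpow_sub hγ₀ a b b)
            (intervalIntegrable_rpow_sub hγ₀ a b c),
          integral_rpow_sub hγ₀, integral_rpow_sub hγ₀, sub_self, Real.zero_rpow hγ₀.ne']
        ring
    _ ≤ M * (c - b) ^ γ / γ := by
        rw [mul_div_assoc]
        gcongr
        linarith [Real.rpow_le_rpow (by linarith) (by linarith : b - a ≤ c - a) hγ₀.le]

lemma norm_integral_rpow_sub_smul_sub_le (hγ₀ : 0 < γ) (hγ₁ : γ ≤ 1) {a t t' M : ℝ}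
    (hat : a ≤ t) (htt' : t ≤ t') (hM₀ : 0 ≤ M) {g : ℝ → E}
    (hg : AEStronglyMeasurable g (volume.restrict (Ioc a t'))) (hM : ∀ s ∈ Ioc a t', ‖g s‖ ≤ M) :
    ‖(∫ s in a..t', (t' - s) ^ (γ - 1) • g s) - ∫ s in a..t, (t - s) ^ (γ - 1) • g s‖
      ≤ 2 * M / γ * (t' - t) ^ γ := by
  have hM_left : ∀ s ∈ Ioc a t, ‖g s‖ ≤ M := fun s hs => hM s ⟨hs.1, hs.2.trans htt'⟩
  have hM_right : ∀ s ∈ Ioc t t', ‖g s‖ ≤ M := fun s hs => hM s ⟨hat.trans_lt hs.1, hs.2⟩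
  have hg_left := hg.mono_measure (Measure.restrict_mono (Ioc_subset_Ioc_right htt') le_rfl)
  have hg_right := hg.mono_measure (Measure.restrict_mono (Ioc_subset_Ioc_left hat) le_rfl)
  have hsplit : (∫ s in a..t', (t' - s) ^ (γ - 1) • g s) - ∫ s in a..t, (t - s) ^ (γ - 1) • g s
      = (∫ s in a..t, ((t' - s) ^ (γ - 1) - (t - s) ^ (γ - 1)) • g s)
        + ∫ s in t..t', (t' - s) ^ (γ - 1) • g s := by
    simp_rw [sub_smul]
    rw [← integral_add_adjacent_intervals
        (intervalIntegrable_rpow_sub_smul hγ₀ hat t' M hg_left hM_left)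
        (intervalIntegrable_rpow_sub_smul hγ₀ htt' t' M hg_right hM_right),
      integral_sub (intervalIntegrable_rpow_sub_smul hγ₀ hat t' M hg_left hM_left)
        (intervalIntegrable_rpow_sub_smul hγ₀ hat t M hg_left hM_left)]
    abel
  rw [hsplit]
  calc _ ≤ M * (t' - t) ^ γ / γ + M * (t' - t) ^ γ / γ :=
        (norm_add_le _ _).trans (add_le_add
          (norm_integral_rpow_sub_sub_rpow_sub_smul_le hγ₀ hγ₁ hat htt' hM₀ hM_left)
          (norm_integral_rpow_sub_smul_le hγ₀ htt' hM_right))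
    _ = 2 * M / γ * (t' - t) ^ γ := by ring

lemma continuousOn_integral_rpow_sub_smul (hγ₀ : 0 < γ) (hγ₁ : γ ≤ 1) {T M : ℝ} {g : ℝ → E}
    (hg : AEStronglyMeasurable g (volume.restrict (Ioc 0 T))) (hM : ∀ s ∈ Ioc 0 T, ‖g s‖ ≤ M) :
    ContinuousOn (fun t => ∫ s in (0 : ℝ)..t, (t - s) ^ (γ - 1) • g s) (Icc 0 T) := by
  refine continuousOn_of_norm_sub_le_mul_rpow (C := 2 * max M 0 / γ) hγ₀ fun t ht t' ht' htt' => ?_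
  have hsub : Ioc 0 t' ⊆ Ioc 0 T := Ioc_subset_Ioc_right ht'.2
  exact norm_integral_rpow_sub_smul_sub_le hγ₀ hγ₁ ht.1 htt' (le_max_right M 0)
    (hg.mono_measure (Measure.restrict_mono hsub le_rfl))
    fun s hs => (hM s (hsub hs)).trans (le_max_left M 0)

lemma integral_rpow_sub_mul_exp_le {γ ρ t : ℝ} (hγ : 0 < γ) (hρ : 0 < ρ) (ht : 0 ≤ t) :
    ∫ s in (0 : ℝ)..t, (t - s) ^ (γ - 1) * Real.exp (ρ * s)
      ≤ Real.Gamma γ * Real.exp (ρ * t) / ρ ^ γ := by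
  have hint : IntegrableOn (fun u : ℝ => u ^ (γ - 1) * Real.exp (-(ρ * u))) (Ioi 0) := by
    simpa [Real.rpow_one] using
      integrableOn_rpow_mul_exp_neg_mul_rpow (by linarith : (-1 : ℝ) < γ - 1) one_pos hρ
  have htail : ∫ u in (0 : ℝ)..t, u ^ (γ - 1) * Real.exp (-(ρ * u)) ≤ Real.Gamma γ / ρ ^ γ := by
    rw [intervalIntegral.integral_of_le ht]
    calc ∫ u in Ioc 0 t, u ^ (γ - 1) * Real.exp (-(ρ * u))
        ≤ ∫ u in Ioi 0, u ^ (γ - 1) * Real.exp (-(ρ * u)) :=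
          setIntegral_mono_set hint
            ((ae_restrict_iff' measurableSet_Ioi).2 (ae_of_all _ fun u (hu : 0 < u) => by
              positivity))
            Ioc_subset_Ioi_self.eventuallyLE
      _ = Real.Gamma γ / ρ ^ γ := by
          rw [Real.integral_rpow_mul_exp_neg_mul_Ioi hγ hρ, Real.div_rpow zero_le_one hρ.le,
            Real.one_rpow, one_div_mul_eq_div]
  have hsubst : ∫ s in (0 : ℝ)..t, (t - s) ^ (γ - 1) * Real.exp (ρ * s)
      = Real.exp (ρ * t) * ∫ u in (0 : ℝ)..t, u ^ (γ - 1) * Real.exp (-(ρ * u)) := by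
    have h := intervalIntegral.integral_comp_sub_left
      (fun u => u ^ (γ - 1) * Real.exp (-(ρ * u))) t (a := 0) (b := t)
    rw [sub_self, sub_zero] at h
    rw [← h, ← intervalIntegral.integral_const_mul]
    refine intervalIntegral.integral_congr fun s _ => ?_
    simp only [mul_left_comm (Real.exp (ρ * t)), ← Real.exp_add]
    ring_nf
  calc _ = Real.exp (ρ * t) * ∫ u in (0 : ℝ)..t, u ^ (γ - 1) * Real.exp (-(ρ * u)) := hsubst
    _ ≤ Real.exp (ρ * t) * (Real.Gamma γ / ρ ^ γ) := by gcongr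
    _ = Real.Gamma γ * Real.exp (ρ * t) / ρ ^ γ := by ring

end AbelKernel

section RiemannLiouville

variable {E : Type*} [NormedAddCommGroup E] [NormedSpace ℝ E] {γ : ℝ} {g h : ℝ → E}

def riemannLiouvilleIntegral (γ : ℝ) (g : ℝ → E) (t : ℝ) : E :=
  ∫ s in (0 : ℝ)..t, ((t - s) ^ (γ - 1) / Real.Gamma γ) • g s

lemma riemannLiouvilleIntegral_eq_smul (γ : ℝ) (g : ℝ → E) (t : ℝ) :
    riemannLiouvilleIntegral γ g t
      = (Real.Gamma γ)⁻¹ • ∫ s in (0 : ℝ)..t, (t - s) ^ (γ - 1) • g s := by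
  simp only [riemannLiouvilleIntegral, ← intervalIntegral.integral_smul, smul_smul,
    div_eq_inv_mul]

lemma riemannLiouvilleIntegral_congr {t : ℝ} (ht : 0 ≤ t) (hgh : EqOn g h (Icc 0 t)) :
    riemannLiouvilleIntegral γ g t = riemannLiouvilleIntegral γ h t :=
  intervalIntegral.integral_congr fun s hs => by
    rw [uIcc_of_le ht] at hs
    rw [hgh hs]

lemma riemannLiouvilleIntegral_sub (hγ : 0 < γ) {t Mg Mh : ℝ} (ht : 0 ≤ t)
    (hg : AEStronglyMeasurable g (volume.restrict (Ioc 0 t))) (hgM : ∀ s ∈ Ioc 0 t, ‖g s‖ ≤ Mg)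
    (hh : AEStronglyMeasurable h (volume.restrict (Ioc 0 t))) (hhM : ∀ s ∈ Ioc 0 t, ‖h s‖ ≤ Mh) :
    riemannLiouvilleIntegral γ g t - riemannLiouvilleIntegral γ h t
      = riemannLiouvilleIntegral γ (fun s => g s - h s) t := by
  simp only [riemannLiouvilleIntegral_eq_smul, ← smul_sub,
    ← intervalIntegral.integral_sub (intervalIntegrable_rpow_sub_smul hγ ht t Mg hg hgM)
      (intervalIntegrable_rpow_sub_smul hγ ht t Mh hh hhM)]

lemma continuousOn_riemannLiouvilleIntegral (hγ₀ : 0 < γ) (hγ₁ : γ ≤ 1) {T M : ℝ}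
    (hg : AEStronglyMeasurable g (volume.restrict (Ioc 0 T))) (hM : ∀ s ∈ Ioc 0 T, ‖g s‖ ≤ M) :
    ContinuousOn (riemannLiouvilleIntegral γ g) (Icc 0 T) := by
  rw [show riemannLiouvilleIntegral γ g = _ from funext (riemannLiouvilleIntegral_eq_smul γ g)]
  exact (continuousOn_integral_rpow_sub_smul hγ₀ hγ₁ hg hM).const_smul (Real.Gamma γ)⁻¹

lemma norm_riemannLiouvilleIntegral_le_of_norm_le_exp (hγ : 0 < γ) {ρ t c : ℝ} (hρ : 0 < ρ)
    (ht : 0 ≤ t) (hc : 0 ≤ c) (hg : ∀ s ∈ Ioc 0 t, ‖g s‖ ≤ c * Real.exp (ρ * s)) :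
    ‖riemannLiouvilleIntegral γ g t‖ ≤ c * Real.exp (ρ * t) / ρ ^ γ := by
  have hΓ := Real.Gamma_pos_of_pos hγ
  calc ‖riemannLiouvilleIntegral γ g t‖
      ≤ ∫ s in (0 : ℝ)..t, c / Real.Gamma γ * ((t - s) ^ (γ - 1) * Real.exp (ρ * s)) := by
        refine intervalIntegral.norm_integral_le_of_norm_le ht (ae_of_all _ fun s hs => ?_)
          (((intervalIntegrable_rpow_sub hγ 0 t t).mul_continuousOn
            (by fun_prop)).const_mul _)
        have hker : 0 ≤ (t - s) ^ (γ - 1) := Real.rpow_nonneg (by linarith [hs.2]) _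
        rw [norm_smul, Real.norm_of_nonneg (by positivity)]
        calc (t - s) ^ (γ - 1) / Real.Gamma γ * ‖g s‖
            ≤ (t - s) ^ (γ - 1) / Real.Gamma γ * (c * Real.exp (ρ * s)) := by gcongr; exact hg s hs
          _ = _ := by ring
    _ = c / Real.Gamma γ * ∫ s in (0 : ℝ)..t, (t - s) ^ (γ - 1) * Real.exp (ρ * s) :=
        intervalIntegral.integral_const_mul _ _
    _ ≤ c / Real.Gamma γ * (Real.Gamma γ * Real.exp (ρ * t) / ρ ^ γ) := by
        gcongr
        exact integral_rpow_sub_mul_exp_le hγ hρ ht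
    _ = c * Real.exp (ρ * t) / ρ ^ γ := by field_simp

end RiemannLiouville

section BieleckiWeight

variable {E : Type*} [NormedAddCommGroup E] [NormedSpace ℝ E] {T : ℝ} (hT : 0 ≤ T) (ρ : ℝ)

def expWeightedExtend (w : C(Icc 0 T, E)) (s : ℝ) : E :=
  Real.exp (ρ * s) • Set.IccExtend hT w s

lemma continuous_expWeightedExtend (w : C(Icc 0 T, E)) : Continuous (expWeightedExtend hT ρ w) :=
  (Real.continuous_exp.comp (continuous_const_mul ρ)).smul
    (ContinuousMap.IccExtend hT w).continuous

lemma expWeightedExtend_of_mem (w : C(Icc 0 T, E)) {s : ℝ} (hs : s ∈ Icc 0 T) :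
    expWeightedExtend hT ρ w s = Real.exp (ρ * s) • w ⟨s, hs⟩ := by
  rw [expWeightedExtend, Set.IccExtend_of_mem hT w hs]

lemma norm_expWeightedExtend_sub_le (w w' : C(Icc 0 T, E)) {s : ℝ} (hs : s ∈ Icc 0 T) :
    ‖expWeightedExtend hT ρ w s - expWeightedExtend hT ρ w' s‖
      ≤ dist w w' * Real.exp (ρ * s) := by
  rw [expWeightedExtend_of_mem hT ρ w hs, expWeightedExtend_of_mem hT ρ w' hs, ← smul_sub,
    norm_smul, Real.norm_of_nonneg (Real.exp_pos _).le, mul_comm, ← dist_eq_norm]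
  gcongr
  exact ContinuousMap.dist_apply_le_dist _

end BieleckiWeight

section Volterra

lemma exists_norm_apply_le_of_lipschitzWith {E : Type*} [NormedAddCommGroup E] {T M : ℝ}
    {K : ℝ≥0} {F : ℝ → E → E} (hFlip : ∀ s ∈ Ioc 0 T, LipschitzWith K (F s))
    (hF0 : ∀ s ∈ Ioc 0 T, ‖F s 0‖ ≤ M) {u : ℝ → E} (hu : ContinuousOn u (Icc 0 T)) :
    ∃ B, ∀ s ∈ Ioc 0 T, ‖F s (u s)‖ ≤ B := by
  obtain ⟨C, hC⟩ := isCompact_Icc.exists_bound_of_continuousOn hu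
  refine ⟨M + K * C, fun s hs => ?_⟩
  calc ‖F s (u s)‖ ≤ ‖F s 0‖ + ‖F s (u s) - F s 0‖ := norm_le_insert' _ _
    _ ≤ M + K * ‖u s‖ := by
        gcongr
        · exact hF0 s hs
        · simpa using (hFlip s hs).norm_sub_le (u s) 0
    _ ≤ M + K * C := by gcongr; exact hC s (Ioc_subset_Icc_self hs)

variable {E : Type*} [NormedAddCommGroup E] [NormedSpace ℝ E] {γ T M : ℝ} {K : ℝ≥0}
  {F : ℝ → E → E}

def IsRiemannLiouvilleVolterraSolution (γ T : ℝ) (F : ℝ → E → E) (u : ℝ → E) : Prop :=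
  ContinuousOn u (Icc 0 T) ∧
    ∀ t ∈ Icc 0 T, u t = riemannLiouvilleIntegral γ (fun s => F s (u s)) t

lemma continuousOn_riemannLiouvilleIntegral_comp (hγ₀ : 0 < γ) (hγ₁ : γ ≤ 1)
    (hFm : ∀ u : ℝ → E, Continuous u →
      AEStronglyMeasurable (fun s => F s (u s)) (volume.restrict (Ioc 0 T)))
    (hFlip : ∀ s ∈ Ioc 0 T, LipschitzWith K (F s)) (hF0 : ∀ s ∈ Ioc 0 T, ‖F s 0‖ ≤ M)
    {u : ℝ → E} (hu : Continuous u) :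
    ContinuousOn (riemannLiouvilleIntegral γ fun s => F s (u s)) (Icc 0 T) :=
  have ⟨_, hB⟩ := exists_norm_apply_le_of_lipschitzWith hFlip hF0 hu.continuousOn
  continuousOn_riemannLiouvilleIntegral hγ₀ hγ₁ (hFm u hu) hB

lemma norm_riemannLiouvilleIntegral_comp_sub_le (hγ : 0 < γ)
    (hFm : ∀ u : ℝ → E, Continuous u →
      AEStronglyMeasurable (fun s => F s (u s)) (volume.restrict (Ioc 0 T)))
    (hFlip : ∀ s ∈ Ioc 0 T, LipschitzWith K (F s)) (hF0 : ∀ s ∈ Ioc 0 T, ‖F s 0‖ ≤ M)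
    {u v : ℝ → E} (hu : Continuous u) (hv : Continuous v) {ρ c t : ℝ} (hρ : 0 < ρ) (hc : 0 ≤ c)
    (ht : t ∈ Icc 0 T) (huv : ∀ s ∈ Ioc 0 T, ‖u s - v s‖ ≤ c * Real.exp (ρ * s)) :
    ‖riemannLiouvilleIntegral γ (fun s => F s (u s)) t
        - riemannLiouvilleIntegral γ (fun s => F s (v s)) t‖
      ≤ K * c * Real.exp (ρ * t) / ρ ^ γ := by
  have hsub : Ioc 0 t ⊆ Ioc 0 T := Ioc_subset_Ioc_right ht.2
  have hmono := Measure.restrict_mono hsub (le_refl (volume : Measure ℝ))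
  obtain ⟨Bu, hBu⟩ := exists_norm_apply_le_of_lipschitzWith hFlip hF0 hu.continuousOn
  obtain ⟨Bv, hBv⟩ := exists_norm_apply_le_of_lipschitzWith hFlip hF0 hv.continuousOn
  rw [riemannLiouvilleIntegral_sub hγ ht.1 ((hFm u hu).mono_measure hmono)
    (fun s hs => hBu s (hsub hs)) ((hFm v hv).mono_measure hmono) (fun s hs => hBv s (hsub hs))]
  refine norm_riemannLiouvilleIntegral_le_of_norm_le_exp hγ hρ ht.1 (by positivity)
    fun s hs => ?_
  calc ‖F s (u s) - F s (v s)‖ ≤ K * ‖u s - v s‖ := (hFlip s (hsub hs)).norm_sub_le _ _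
    _ ≤ K * (c * Real.exp (ρ * s)) := by gcongr; exact huv s (hsub hs)
    _ = K * c * Real.exp (ρ * s) := by ring

lemma dist_exp_neg_smul_riemannLiouvilleIntegral_comp_le (hT : 0 ≤ T) (hγ : 0 < γ)
    (hFm : ∀ u : ℝ → E, Continuous u →
      AEStronglyMeasurable (fun s => F s (u s)) (volume.restrict (Ioc 0 T)))
    (hFlip : ∀ s ∈ Ioc 0 T, LipschitzWith K (F s)) (hF0 : ∀ s ∈ Ioc 0 T, ‖F s 0‖ ≤ M)
    {ρ : ℝ} (hρ : 0 < ρ) (hργ : ρ ^ γ = 2 * K + 1) (w w' : C(Icc 0 T, E)) {t : ℝ}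
    (ht : t ∈ Icc 0 T) :
    dist (Real.exp (-(ρ * t)) •
        riemannLiouvilleIntegral γ (fun s => F s (expWeightedExtend hT ρ w s)) t)
      (Real.exp (-(ρ * t)) •
        riemannLiouvilleIntegral γ (fun s => F s (expWeightedExtend hT ρ w' s)) t)
      ≤ 2⁻¹ * dist w w' := by
  rw [dist_smul₀, Real.norm_of_nonneg (Real.exp_pos _).le, dist_eq_norm]
  calc _ ≤ Real.exp (-(ρ * t)) * (K * dist w w' * Real.exp (ρ * t) / ρ ^ γ) := by
        gcongr
        exact norm_riemannLiouvilleIntegral_comp_sub_le hγ hFm hFlip hF0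
          (continuous_expWeightedExtend hT ρ w) (continuous_expWeightedExtend hT ρ w') hρ
          dist_nonneg ht fun s hs =>
            norm_expWeightedExtend_sub_le hT ρ w w' (Ioc_subset_Icc_self hs)
    _ = K / (2 * K + 1) * dist w w' := by
        rw [hργ, Real.exp_neg]
        field_simp
    _ ≤ 2⁻¹ * dist w w' := by
        gcongr
        rw [div_le_iff₀ (by positivity)]
        linarith

/-- The fixed point is taken for the conjugated operator `w ↦ exp (-ρ t) • V (exp (ρ ·) • w) t`
on `C([0, T], E)`, i.e. for `V` in the Bielecki norm; it is `1/2`-Lipschitz for `ρ ^ γ = 2 K + 1`. -/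
theorem exists_isRiemannLiouvilleVolterraSolution_unique [CompleteSpace E] (hT : 0 ≤ T)
    (hγ₀ : 0 < γ) (hγ₁ : γ ≤ 1)
    (hFm : ∀ u : ℝ → E, Continuous u →
      AEStronglyMeasurable (fun s => F s (u s)) (volume.restrict (Ioc 0 T)))
    (hFlip : ∀ s ∈ Ioc 0 T, LipschitzWith K (F s)) (hF0 : ∀ s ∈ Ioc 0 T, ‖F s 0‖ ≤ M) :
    ∃ u, IsRiemannLiouvilleVolterraSolution γ T F u ∧
      ∀ v, IsRiemannLiouvilleVolterraSolution γ T F v → EqOn v u (Icc 0 T) := by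
  set ρ := (2 * (K : ℝ) + 1) ^ γ⁻¹
  have hρ : 0 < ρ := by positivity
  have hργ : ρ ^ γ = 2 * K + 1 := by
    rw [← Real.rpow_mul (by positivity), inv_mul_cancel₀ hγ₀.ne', Real.rpow_one]
  have hcancel (r : ℝ) (x : E) : Real.exp r • Real.exp (-r) • x = x := by
    rw [smul_smul, ← Real.exp_add, add_neg_cancel, Real.exp_zero, one_smul]
  have hexp_neg : Continuous fun t : Icc 0 T => Real.exp (-(ρ * t)) := by fun_prop
  let Φ (w : C(Icc 0 T, E)) : C(Icc 0 T, E) :=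
    ⟨fun t => Real.exp (-(ρ * t)) •
        riemannLiouvilleIntegral γ (fun s => F s (expWeightedExtend hT ρ w s)) t,
      hexp_neg.smul (continuousOn_iff_continuous_domRestrict.1
        (continuousOn_riemannLiouvilleIntegral_comp hγ₀ hγ₁ hFm hFlip hF0
          (continuous_expWeightedExtend hT ρ w)))⟩
  have hΦ : ContractingWith 2⁻¹ Φ :=
    ⟨by norm_num, LipschitzWith.of_dist_le_mul fun w w' =>
      (ContinuousMap.dist_le (by positivity)).2 fun t => by
        push_cast
        exact dist_exp_neg_smul_riemannLiouvilleIntegral_comp_le hT hγ₀ hFm hFlip hF0 hρ hργ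
          w w' t.2⟩
  set w := ContractingWith.fixedPoint Φ hΦ
  have hw : Φ w = w := hΦ.fixedPoint_isFixedPt
  refine ⟨expWeightedExtend hT ρ w,
    ⟨(continuous_expWeightedExtend hT ρ w).continuousOn, fun t ht => ?_⟩, fun v hv t ht => ?_⟩
  · rw [expWeightedExtend_of_mem hT ρ w ht]
    conv_lhs => rw [← hw]
    exact hcancel _ _
  · let wv : C(Icc 0 T, E) := ⟨fun t => Real.exp (-(ρ * t)) • v t,
      hexp_neg.smul (continuousOn_iff_continuous_domRestrict.1 hv.1)⟩
    have hwv : Φ wv = wv := ContinuousMap.ext fun t => by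
      change Real.exp (-(ρ * t)) •
          riemannLiouvilleIntegral γ (fun s => F s (expWeightedExtend hT ρ wv s)) t
        = Real.exp (-(ρ * t)) • v t
      rw [hv.2 t t.2, riemannLiouvilleIntegral_congr t.2.1 fun s hs => ?_]
      rw [expWeightedExtend_of_mem hT ρ wv ⟨hs.1, hs.2.trans t.2.2⟩]
      exact congrArg (F s) (hcancel _ _)
    calc v t = Real.exp (ρ * t) • wv ⟨t, ht⟩ := (hcancel _ _).symm
      _ = expWeightedExtend hT ρ w t := by
        rw [hΦ.fixedPoint_unique' hwv hw, expWeightedExtend_of_mem hT ρ w ht]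

end Volterra

section LinearizedEquation

variable {n : ℕ} {f : Vec n → Vec n} {f' : Vec n → Vec n → Vec n} {K : ℝ≥0}
  {a δa : ℝ → Mat n} {ℓ δℓ y : ℝ → Vec n}

def linearizedRhs (f' : Vec n → Vec n → Vec n) (a : ℝ → Mat n) (ℓ y : ℝ → Vec n)
    (δa : ℝ → Mat n) (δℓ : ℝ → Vec n) (s : ℝ) (x : Vec n) : Vec n :=
  f' (mv (a s) (y s) + ℓ s) (mv (a s) x + mv (δa s) (y s) + δℓ s)

lemma isLinSolution_iff {γ T : ℝ} {δy : ℝ → Vec n} :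
    IsLinSolution γ T f' a ℓ y δa δℓ δy
      ↔ IsRiemannLiouvilleVolterraSolution γ T (linearizedRhs f' a ℓ y δa δℓ) δy :=
  Iff.rfl

lemma aestronglyMeasurable_linearizedRhs {μ : Measure ℝ} (hf : Continuous f)
    (hf' : HasDirectionalDerivatives f f') (ha : AEMeasurable a μ) (hℓ : AEMeasurable ℓ μ)
    (hy : AEMeasurable y μ) (hδa : AEMeasurable δa μ) (hδℓ : AEMeasurable δℓ μ) {u : ℝ → Vec n}
    (hu : AEMeasurable u μ) :
    AEStronglyMeasurable (fun s => linearizedRhs f' a ℓ y δa δℓ s (u s)) μ :=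
  ((measurable_uncurry_dirDeriv hf hf').comp_aemeasurable
    (((ha.mv hy).add hℓ).prodMk (((ha.mv hu).add (hδa.mv hy)).add hδℓ))).aestronglyMeasurable

lemma lipschitzWith_linearizedRhs (hf : LipschitzWith K f) (hf' : HasDirectionalDerivatives f f')
    {s C : ℝ} (haC : ‖a s‖ ≤ C) :
    LipschitzWith (K * C.toNNReal) (linearizedRhs f' a ℓ y δa δℓ s) := by
  refine ((lipschitzWith_dirDeriv hf hf' _).comp
    (((lipschitzWith_mv (a s)).add (.const _)).add (.const _))).weaken ?_
  rw [add_zero, add_zero]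
  gcongr
  rw [← NNReal.coe_le_coe, coe_nnnorm]
  exact haC.trans (Real.le_coe_toNNReal C)

lemma norm_linearizedRhs_zero_le (hf : LipschitzWith K f) (hf' : HasDirectionalDerivatives f f')
    {s C Cy : ℝ} (hδaC : ‖δa s‖ ≤ C) (hyC : ‖y s‖ ≤ Cy) (hδℓC : ‖δℓ s‖ ≤ C) :
    ‖linearizedRhs f' a ℓ y δa δℓ s 0‖ ≤ K * (C * Cy + C) := by
  have hmv0 : mv (a s) 0 = 0 := by simpa using mv_sub (a s) 0 0
  calc _ ≤ K * ‖mv (a s) 0 + mv (δa s) (y s) + δℓ s‖ := norm_dirDeriv_le hf hf' _ _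
    _ ≤ K * (C * Cy + C) := by
      rw [hmv0, zero_add]
      gcongr
      refine (norm_add_le _ _).trans (add_le_add ((norm_mv_le _ _).trans ?_) hδℓC)
      exact mul_le_mul hδaC hyC (norm_nonneg _) ((norm_nonneg _).trans hδaC)

end LinearizedEquation

theorem stmt_5_general {n : ℕ} (γ T L : ℝ) (hγ : γ ∈ Ioo (0:ℝ) 1) (hT : 0 < T)
    (y₀ : Vec n) (f : Vec n → Vec n) (f' : Vec n → Vec n → Vec n)
    (hf : ∀ z₁ z₂ : Vec n, ‖f z₁ - f z₂‖ ≤ L * ‖z₁ - z₂‖)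
    (hf' : ∀ z d : Vec n,
      Tendsto (fun τ : ℝ => τ⁻¹ • (f (z + τ • d) - f z)) (𝓝[>] 0) (𝓝 (f' z d)))
    (a δa : ℝ → Mat n) (ℓ δℓ : ℝ → Vec n)
    (ha : Measurable a) (hℓ : Measurable ℓ) (hδa : Measurable δa) (hδℓ : Measurable δℓ)
    (hbd : ∃ C : ℝ, ∀ t ∈ Icc (0:ℝ) T, ‖a t‖ ≤ C ∧ ‖ℓ t‖ ≤ C ∧ ‖δa t‖ ≤ C ∧ ‖δℓ t‖ ≤ C)
    (y : ℝ → Vec n) (hy : IsMildSolution γ T y₀ f a ℓ y) :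
    ∃ δy : ℝ → Vec n, IsLinSolution γ T f' a ℓ y δa δℓ δy ∧
      ∀ δz : ℝ → Vec n, IsLinSolution γ T f' a ℓ y δa δℓ δz →
        ∀ t ∈ Icc (0:ℝ) T, δz t = δy t := by
  obtain ⟨C, hC⟩ := hbd
  obtain ⟨Cy, hCy⟩ := isCompact_Icc.exists_bound_of_continuousOn hy.1
  have hfL : LipschitzWith L.toNNReal f :=
    LipschitzWith.of_dist_le' fun z₁ z₂ => by simpa only [dist_eq_norm] using hf z₁ z₂
  have hy_ae : AEMeasurable y (volume.restrict (Ioc 0 T)) :=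
    (hy.1.mono Ioc_subset_Icc_self).aemeasurable measurableSet_Ioc
  obtain ⟨δy, hδy, huniq⟩ := exists_isRiemannLiouvilleVolterraSolution_unique hT.le hγ.1 hγ.2.le
    (fun u hu => aestronglyMeasurable_linearizedRhs hfL.continuous hf' ha.aemeasurable
      hℓ.aemeasurable hy_ae hδa.aemeasurable hδℓ.aemeasurable hu.aemeasurable)
    (fun s hs => lipschitzWith_linearizedRhs hfL hf' (hC s (Ioc_subset_Icc_self hs)).1)
    (fun s hs => norm_linearizedRhs_zero_le hfL hf' (hC s (Ioc_subset_Icc_self hs)).2.2.1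
      (hCy s (Ioc_subset_Icc_self hs)) (hC s (Ioc_subset_Icc_self hs)).2.2.2)
  exact ⟨δy, isLinSolution_iff.2 hδy, fun δz hδz t ht => huniq δz (isLinSolution_iff.1 hδz) ht⟩

/-- For every `(a,ℓ) ∈ L^∞` with mild solution `y = S(a,ℓ)` and every
direction `(δa,δℓ) ∈ L^∞`, the linearized integral equation admits a unique solution
`δy ∈ C([0,T];ℝⁿ)`. -/
theorem stmt_5 {n : ℕ} (γ T L : ℝ) (hγ : γ ∈ Ioo (0:ℝ) 1) (hT : 0 < T) (hL : 0 < L)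
    (y₀ : Vec n) (f : Vec n → Vec n) (f' : Vec n → Vec n → Vec n)
    (hf : ∀ z₁ z₂ : Vec n, ‖f z₁ - f z₂‖ ≤ L * ‖z₁ - z₂‖)
    (hf' : ∀ z d : Vec n,
      Tendsto (fun τ : ℝ => τ⁻¹ • (f (z + τ • d) - f z)) (𝓝[>] 0) (𝓝 (f' z d)))
    (a δa : ℝ → Mat n) (ℓ δℓ : ℝ → Vec n)
    (ha : Measurable a) (hℓ : Measurable ℓ) (hδa : Measurable δa) (hδℓ : Measurable δℓ)
    (hbd : ∃ C : ℝ, ∀ t ∈ Icc (0:ℝ) T, ‖a t‖ ≤ C ∧ ‖ℓ t‖ ≤ C ∧ ‖δa t‖ ≤ C ∧ ‖δℓ t‖ ≤ C)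
    (y : ℝ → Vec n) (hy : IsMildSolution γ T y₀ f a ℓ y) :
    ∃ δy : ℝ → Vec n, IsLinSolution γ T f' a ℓ y δa δℓ δy ∧
      ∀ δz : ℝ → Vec n, IsLinSolution γ T f' a ℓ y δa δℓ δz →
        ∀ t ∈ Icc (0:ℝ) T, δz t = δy t :=
  stmt_5_general γ T L hγ hT y₀ f f' hf hf' a δa ℓ δℓ ha hℓ hδa hδℓ hbd y hy
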